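/- If Γ_E(R) has more than 3 vertices, then no associated prime of R is a leaf of Γ_E(R); i.e., if ann(y) is prime then deg[y] ≥ 2. -/

import Mathlib

open scoped Classical

noncomputable section

/-- The annihilator ideal of an element `x` of a commutative ring `R`. -/
def ann (R : Type*) [CommRing R] (x : R) : Ideal R := Ideal.torsionOf R R x

/-- The type of nonzero zero divisors of `R`. -/
def ZD (R : Type*) [CommRing R] : Type _ :=
  {x : R // x ≠ 0 ∧ ∃ y : R, y ≠ 0 ∧ x * y = 0}

/-- Two zero divisors are equivalent iff they have the same annihilator. -/
instance annSetoid (R : Type*) [CommRing R] : Setoid (ZD R) :=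
  ⟨fun a b => ann R a.1 = ann R b.1,
   fun _ => rfl, Eq.symm, Eq.trans⟩

/-- The vertex set of `Γ_E(R)`: equivalence classes of nonzero zero divisors. -/
def GammaEV (R : Type*) [CommRing R] : Type _ := Quotient (annSetoid R)

/-- The class of a nonzero zero divisor. -/
def cls (R : Type*) [CommRing R] (a : ZD R) : GammaEV R :=
  Quotient.mk (annSetoid R) a

/-- The graph `Γ_E(R)` of equivalence classes of zero divisors. -/
def gammaE (R : Type*) [CommRing R] : SimpleGraph (GammaEV R) where
  Adj u v := u ≠ v ∧ ∃ a b : ZD R, cls R a = u ∧ cls R b = v ∧ a.1 * b.1 = 0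
  symm := ⟨by
    rintro u v ⟨huv, a, b, ha, hb, hab⟩
    exact ⟨huv.symm, b, a, hb, ha, by rwa [mul_comm] at hab⟩⟩
  loopless := ⟨by rintro u ⟨h, -⟩; exact h rfl⟩

/-- `I` is a maximal element of the family `F = {ann x : 0 ≠ x ∈ R}`. -/
def MaxAnn (R : Type*) [CommRing R] (I : Ideal R) : Prop :=
  (∃ x : R, x ≠ 0 ∧ I = ann R x) ∧
    ∀ y : R, y ≠ 0 → I ≤ ann R y → I = ann R y

/-!
Let `p = ann b` be prime and suppose `[b]` has at most one neighbour. If `b t ≠ 0`, then `t ∉ p`,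
so every nonzero `z` with `z t = 0` lies in `p` and, as `t ∈ ann z \ p`, gives a neighbour `[z] ≠ [b]`.
Hence for two vertices `[t]`, `[c]` outside `{[b]} ∪ N([b])`, a nonzero `r ∈ ann t` and a nonzero
annihilator `d` of `c` both lie in the unique neighbour's class, so `c ∈ ann d = ann r`; thus
`ann t ≤ ann c` and symmetrically. So at most one vertex lies outside `{[b]} ∪ N([b])`, i.e.
`Γ_E(R)` has at most three vertices.
-/

lemma mem_ann_iff (R : Type*) [CommRing R] (x r : R) : r ∈ ann R x ↔ r * x = 0 := by
  rw [ann, Ideal.mem_torsionOf_iff, smul_eq_mul]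

namespace ZD

variable {R : Type*} [CommRing R]

lemma ne_zero (a : ZD R) : a.1 ≠ 0 := a.2.1

lemma exists_mul_eq_zero (a : ZD R) : ∃ y : R, y ≠ 0 ∧ a.1 * y = 0 := a.2.2

def ofMulEqZero (r : R) (hr : r ≠ 0) (a : ZD R) (h : r * a.1 = 0) : ZD R :=
  ⟨r, hr, a.1, a.ne_zero, h⟩

end ZD

section

variable {R : Type*} [CommRing R]

lemma cls_eq_iff (a b : ZD R) : cls R a = cls R b ↔ ann R a.1 = ann R b.1 :=
  Quotient.eq

lemma gammaE_adj_of_mul_eq_zero {a b : ZD R} (hab : cls R a ≠ cls R b) (h : a.1 * b.1 = 0) :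
    (gammaE R).Adj (cls R a) (cls R b) :=
  ⟨hab, a, b, rfl, rfl, h⟩

lemma gammaE_adj_of_mul_eq_zero_of_mul_ne_zero {b : ZD R} (hprime : (ann R b.1).IsPrime)
    {t : R} (hbt : b.1 * t ≠ 0) {z : ZD R} (hzt : z.1 * t = 0) :
    (gammaE R).Adj (cls R b) (cls R z) := by
  have ht : t ∉ ann R b.1 := by rwa [mem_ann_iff, mul_comm]
  have hz : z.1 ∈ ann R b.1 :=
    (hprime.mem_or_mem (by simp [hzt])).resolve_right ht
  refine gammaE_adj_of_mul_eq_zero (fun hbz => ht ?_) ?_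
  · rw [(cls_eq_iff b z).mp hbz, mem_ann_iff, mul_comm, hzt]
  · rwa [mul_comm, ← mem_ann_iff]

lemma ann_le_ann_of_neighborSet_subsingleton {b : ZD R} (hprime : (ann R b.1).IsPrime)
    (hN : ((gammaE R).neighborSet (cls R b)).Subsingleton)
    {t c : ZD R} (hbt : b.1 * t.1 ≠ 0) (hbc : b.1 * c.1 ≠ 0) : ann R t.1 ≤ ann R c.1 := by
  intro r hr
  rw [mem_ann_iff] at hr ⊢
  obtain rfl | hr0 := eq_or_ne r 0
  · exact zero_mul _
  obtain ⟨d, hd0, hcd⟩ := c.exists_mul_eq_zero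
  have hdc : d * c.1 = 0 := by rwa [mul_comm]
  have hclass : cls R (.ofMulEqZero d hd0 c hdc) = cls R (.ofMulEqZero r hr0 t hr) :=
    hN (gammaE_adj_of_mul_eq_zero_of_mul_ne_zero hprime hbc hdc)
      (gammaE_adj_of_mul_eq_zero_of_mul_ne_zero hprime hbt hr)
  have hann : ann R d = ann R r := (cls_eq_iff _ _).mp hclass
  have hc : c.1 ∈ ann R d := by rwa [mem_ann_iff, mul_comm]
  rw [hann, mem_ann_iff] at hc
  rwa [mul_comm]

lemma compl_insert_neighborSet_subsingleton {b : ZD R} (hprime : (ann R b.1).IsPrime)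
    (hN : ((gammaE R).neighborSet (cls R b)).Subsingleton) :
    (insert (cls R b) ((gammaE R).neighborSet (cls R b)))ᶜ.Subsingleton := by
  have hmul : ∀ t : ZD R, cls R t ∉ insert (cls R b) ((gammaE R).neighborSet (cls R b)) →
      b.1 * t.1 ≠ 0 := by
    intro t ht hbt
    by_cases hbt_cls : cls R b = cls R t
    · exact ht (.inl hbt_cls.symm)
    · exact ht (.inr (gammaE_adj_of_mul_eq_zero hbt_cls hbt))
  rintro u hu v hv
  induction u using Quotient.inductionOn
  induction v using Quotient.inductionOn
  rename_i t c
  exact (cls_eq_iff t c).mpr <| le_antisymm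
    (ann_le_ann_of_neighborSet_subsingleton hprime hN (hmul t hu) (hmul c hv))
    (ann_le_ann_of_neighborSet_subsingleton hprime hN (hmul c hv) (hmul t hu))

end

theorem stmt16_general (R : Type*) [CommRing R]
    (hcard : 4 ≤ (Set.univ : Set (GammaEV R)).encard)
    (b : ZD R) (hprime : (ann R b.1).IsPrime) :
    2 ≤ ((gammaE R).neighborSet (cls R b)).encard := by
  by_contra! hdeg
  set N := (gammaE R).neighborSet (cls R b)
  have hN : N.encard ≤ 1 := Order.le_of_lt_add_one hdeg
  have hcompl := compl_insert_neighborSet_subsingleton hprime (Set.encard_le_one_iff_subsingleton.mp hN)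
  have : (Set.univ : Set (GammaEV R)).encard ≤ 3 :=
    calc (Set.univ : Set (GammaEV R)).encard
        = (insert (cls R b) N).encard + (insert (cls R b) N)ᶜ.encard :=
          (Set.encard_add_encard_compl _).symm
      _ ≤ (1 + 1) + 1 := by
          gcongr
          · exact (Set.encard_insert_le _ _).trans (by gcongr)
          · exact Set.encard_le_one_iff_subsingleton.mpr hcompl
      _ = 3 := by norm_num
  exact absurd (hcard.trans this) (by norm_num)

theorem stmt16 (R : Type*) [CommRing R] [IsNoetherianRing R]
    (hcard : 4 ≤ (Set.univ : Set (GammaEV R)).encard)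
    (b : ZD R) (hprime : (ann R b.1).IsPrime) :
    2 ≤ ((gammaE R).neighborSet (cls R b)).encard :=
  stmt16_general R hcard b hprime
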